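/- For every integer n ≥ 2, Σ_{j=1}^{n} Σ_{k=1}^{j} bel_{k,λ} · S_{2,λ}(j,k) · S_{2,λ}(n,j) = 0, and bel_{1,λ} = 1. -/

import Mathlib

open PowerSeries Finset

noncomputable section

/-- Composition of formal power series (the standard composition when the inner
series `f` has zero constant term, since then `coeff n (f ^ k) = 0` for `k > n`). -/
def pcomp {R : Type*} [CommRing R] (g f : PowerSeries R) : PowerSeries R :=
  PowerSeries.mk fun n =>
    ∑ k ∈ Finset.range (n + 1), PowerSeries.coeff k g * PowerSeries.coeff n (f ^ k)

/-- The formal power series `log(1+t)` over `ℚ`. -/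
def Lq : PowerSeries ℚ := PowerSeries.mk fun n => if n = 0 then 0 else (-1) ^ (n + 1) / n

/-- The formal power series `-log(1-t)` over `ℚ`. -/
def Labs : PowerSeries ℚ := PowerSeries.mk fun n => if n = 0 then 0 else 1 / n

/-- Signed Stirling numbers of the first kind: `(log(1+t))^k / k! = Σ S₁(n,k) tⁿ/n!`. -/
def S1 (n k : ℕ) : ℚ := n.factorial / k.factorial * PowerSeries.coeff n (Lq ^ k)

/-- Unsigned Stirling numbers of the first kind: `(-log(1-t))^k / k! = Σ |s(n,k)| tⁿ/n!`. -/
def uS1 (n k : ℕ) : ℚ := n.factorial / k.factorial * PowerSeries.coeff n (Labs ^ k)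

/-- Stirling numbers of the second kind: `(eᵗ-1)^k / k! = Σ S₂(n,k) tⁿ/n!`. -/
def S2 (n k : ℕ) : ℚ :=
  n.factorial / k.factorial * PowerSeries.coeff n ((PowerSeries.exp ℚ - 1) ^ k)

/-- `λ^(n-1) * (1)_{n,1/λ} = ∏_{j=1}^{n-1} (λ - j)`. -/
def dc (l : ℚ) (n : ℕ) : ℚ := ∏ j ∈ Finset.Ico 1 n, (l - j)

/-- Degenerate falling factorial `(1)_{n,λ} = ∏_{j=0}^{n-1} (1 - jλ)`. -/
def ffac (l : ℚ) (n : ℕ) : ℚ := ∏ j ∈ Finset.range n, (1 - j * l)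

/-- Degenerate logarithm `log_λ(1+t) = Σ_{n≥1} λ^{n-1}(1)_{n,1/λ} tⁿ/n!`. -/
def Ld (l : ℚ) : PowerSeries ℚ :=
  PowerSeries.mk fun n => if n = 0 then 0 else dc l n / n.factorial

/-- Degenerate exponential `e_λ(t) = Σ_{n≥0} (1)_{n,λ} tⁿ/n!`. -/
def Ed (l : ℚ) : PowerSeries ℚ := PowerSeries.mk fun n => ffac l n / n.factorial

/-- Degenerate Stirling numbers of the first kind. -/
def S1d (l : ℚ) (n k : ℕ) : ℚ :=
  n.factorial / k.factorial * PowerSeries.coeff n (Ld l ^ k)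

/-- Degenerate Stirling numbers of the second kind. -/
def S2d (l : ℚ) (n k : ℕ) : ℚ :=
  n.factorial / k.factorial * PowerSeries.coeff n ((Ed l - 1) ^ k)

/-- Bell numbers of the second kind: `log(1 + log(1+t)) = Σ_{n≥1} bel_n tⁿ/n!`. -/
def belNum (n : ℕ) : ℚ := n.factorial * PowerSeries.coeff n (pcomp Lq Lq)

/-- Bell numbers of the second kind via the explicit formula. -/
def belN (m : ℕ) : ℚ :=
  ∑ k ∈ Finset.Icc 1 m, (-1) ^ (k - 1) * (k - 1).factorial * S1 m k

/-- Bell polynomials of the second kind. -/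
def belPoly (n : ℕ) : Polynomial ℚ :=
  ∑ k ∈ Finset.Icc 1 n,
    Polynomial.C ((-1) ^ (k - 1) * (k - 1).factorial * S1 n k) * Polynomial.X ^ k

/-- Bell polynomials of the second kind evaluated at `x : ℚ`. -/
def belVal (x : ℚ) (m : ℕ) : ℚ :=
  ∑ k ∈ Finset.Icc 1 m, (-1) ^ (k - 1) * (k - 1).factorial * S1 m k * x ^ k

/-- Degenerate Bell numbers of the second kind via generating function. -/
def belNumD (l : ℚ) (n : ℕ) : ℚ := n.factorial * PowerSeries.coeff n (pcomp (Ld l) (Ld l))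

/-- Degenerate Bell numbers of the second kind via the explicit formula. -/
def belND (l : ℚ) (m : ℕ) : ℚ := ∑ j ∈ Finset.Icc 1 m, dc l j * S1d l m j

/-- Degenerate Bell polynomials of the second kind. -/
def belPolyD (l : ℚ) (n : ℕ) : Polynomial ℚ :=
  ∑ k ∈ Finset.Icc 1 n, Polynomial.C (dc l k * S1d l n k) * Polynomial.X ^ k

/-- `log(1+t)` as a power series over `ℚ[x]`. -/
def LqP : PowerSeries (Polynomial ℚ) :=
  PowerSeries.mk fun n => if n = 0 then 0 else Polynomial.C ((-1) ^ (n + 1) / n : ℚ)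

/-- `-log(1-t)` as a power series over `ℚ[x]`. -/
def LabsP : PowerSeries (Polynomial ℚ) :=
  PowerSeries.mk fun n => if n = 0 then 0 else Polynomial.C (1 / n : ℚ)

/-- `log(1-t)` as a power series over `ℚ[x]`. -/
def MP : PowerSeries (Polynomial ℚ) :=
  PowerSeries.mk fun n => if n = 0 then 0 else Polynomial.C (-(1 / n) : ℚ)

/-- `log_λ(1+t)` as a power series over `ℚ[x]`. -/
def LdP (l : ℚ) : PowerSeries (Polynomial ℚ) :=
  PowerSeries.mk fun n => if n = 0 then 0 else Polynomial.C (dc l n / n.factorial)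

/-- The polylogarithm `Li_k(y) = Σ_{m≥1} yᵐ/mᵏ` as a power series over `ℚ[x]`. -/
def LiP (k : ℤ) : PowerSeries (Polynomial ℚ) :=
  PowerSeries.mk fun m => if m = 0 then 0 else Polynomial.C (((m : ℚ) ^ k)⁻¹)

/-- The degenerate polylogarithm `Li_{k,λ}` as a power series over `ℚ[x]`. -/
def LidP (l : ℚ) (k : ℤ) : PowerSeries (Polynomial ℚ) :=
  PowerSeries.mk fun m => if m = 0 then 0 else
    Polynomial.C ((-1) ^ (m - 1) * dc l m / ((m - 1).factorial * (m : ℚ) ^ k))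

/-- `-x · log(1-t)` over `ℚ[x]`. -/
def innerP : PowerSeries (Polynomial ℚ) := PowerSeries.C (Polynomial.X : Polynomial ℚ) * LabsP

/-- `-x · log_λ(1-t)` over `ℚ[x]`. -/
def innerD (l : ℚ) : PowerSeries (Polynomial ℚ) :=
  PowerSeries.C (Polynomial.X : Polynomial ℚ) *
    PowerSeries.mk fun n => if n = 0 then 0 else
      Polynomial.C ((-1) ^ (n + 1) * dc l n / n.factorial)

/-- Poly-Bell polynomials of the second kind via generating function. -/
def polyBellP (k : ℤ) (n : ℕ) : Polynomial ℚ :=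
  (n.factorial : ℚ) • PowerSeries.coeff n (pcomp (LiP k) innerP)

/-- Poly-Bell polynomials of the second kind via the explicit formula. -/
def belPk (k : ℤ) (n : ℕ) : Polynomial ℚ :=
  ∑ l ∈ Finset.Icc 1 n,
    Polynomial.C ((((l : ℚ) ^ (k - 1))⁻¹) * (l - 1).factorial * uS1 n l) * Polynomial.X ^ l

/-- Degenerate poly-Bell polynomials of the second kind via generating function. -/
def belDPk (l : ℚ) (k : ℤ) (n : ℕ) : Polynomial ℚ :=
  (n.factorial : ℚ) • PowerSeries.coeff n (pcomp (LidP l k) (innerD l))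

/-- Degenerate poly-Bell polynomials of the second kind via the explicit formula. -/
def belE (l : ℚ) (k : ℤ) (m : ℕ) : Polynomial ℚ :=
  (-1 : Polynomial ℚ) ^ (m - 1) *
    ∑ j ∈ Finset.Icc 1 m,
      Polynomial.C ((((j : ℚ) ^ (k - 1))⁻¹) * dc l j * S1d l m j) * Polynomial.X ^ j

/-! With `b = e_λ(t) - 1`, the series `log_λ(1 + b)` and `t` both solve `(1 + λt) y' = λ y + 1`
with `y(0) = 0`, so they coincide. Comparing coefficients of `log_λ(1 + b)^i = t^i` gives the
orthogonality `∑ₖ S_{2,λ}(n,k) S_{1,λ}(k,i) = δ_{n,i}`. Applied to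
`bel_{k,λ} = ∑ᵢ λ^(i-1) (1)_{i,1/λ} S_{1,λ}(k,i)` it collapses `∑ₖ bel_{k,λ} S_{2,λ}(j,k)` to
`λ^(j-1) (1)_{j,1/λ} = S_{1,λ}(j,1)`, and a second application leaves `δ_{n,1}`. -/

namespace PowerSeries

variable {R : Type*}

theorem coeff_pow_eq_zero_of_lt [CommSemiring R] {f : R⟦X⟧} (hf : constantCoeff f = 0)
    {n d : ℕ} (h : n < d) : coeff n (f ^ d) = 0 :=
  coeff_of_lt_order n <| (Nat.cast_lt.mpr h).trans_le (le_order_pow_of_constantCoeff_eq_zero d hf)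

theorem coeff_subst_eq_sum [CommRing R] {f b : R⟦X⟧} (hb : constantCoeff b = 0) (n : ℕ) :
    coeff n (f.subst b) = ∑ d ∈ range (n + 1), coeff d f * coeff n (b ^ d) := by
  rw [coeff_subst' (HasSubst.of_constantCoeff_zero' hb)]
  refine finsum_eq_sum_of_support_subset _ fun d hd => ?_
  by_contra hdn
  simp only [coe_range, Set.mem_Iio, not_lt] at hdn
  exact hd (by simp only [coeff_pow_eq_zero_of_lt hb (by omega : n < d), smul_zero])

theorem eq_zero_of_derivative_eq_mul [CommRing R] [IsAddTorsionFree R] {ψ g : R⟦X⟧}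
    (h0 : constantCoeff ψ = 0) (h : d⁄dX R ψ = g * ψ) : ψ = 0 := by
  suffices ∀ n, ∀ m ≤ n, coeff m ψ = 0 from ext fun n => this n n le_rfl
  intro n
  induction n with
  | zero => intro m hm; rwa [Nat.le_zero.mp hm, coeff_zero_eq_constantCoeff]
  | succ n ih =>
    intro m hm
    rcases hm.lt_or_eq with hm | rfl
    · exact ih m (by omega)
    have hcoeff : coeff n (g * ψ) = 0 := by
      rw [coeff_mul]
      refine sum_eq_zero fun p hp => ?_
      rw [ih p.2 (HasAntidiagonal.antidiagonal.snd_le hp), mul_zero]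
    have := congrArg (coeff n) h
    rw [coeff_derivative, hcoeff, mul_comm, ← Nat.cast_succ, ← nsmul_eq_mul] at this
    exact (nsmul_eq_zero_iff_right n.succ_ne_zero).mp this

theorem coeff_X_mul_derivative [CommRing R] (f : R⟦X⟧) (n : ℕ) :
    coeff n (X * d⁄dX R f) = n * coeff n f := by
  cases n with
  | zero => simp
  | succ n => rw [coeff_succ_X_mul, coeff_derivative, mul_comm]; push_cast; ring

end PowerSeries

theorem constantCoeff_Ld (l : ℚ) : constantCoeff (Ld l) = 0 := by
  simp [Ld]

theorem constantCoeff_Ed_sub_one (l : ℚ) : constantCoeff (Ed l - 1) = 0 := by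
  simp [← coeff_zero_eq_constantCoeff, Ed, ffac]

theorem coeff_Ld_succ (l : ℚ) (n : ℕ) :
    (n + 1) * coeff (n + 1) (Ld l) = (l - n) * coeff n (Ld l) + if n = 0 then 1 else 0 := by
  rcases Nat.eq_zero_or_pos n with rfl | hn
  · simp [Ld, dc]
  simp only [Ld, coeff_mk, dc, prod_Ico_succ_top hn, Nat.factorial_succ]
  rw [if_neg (by omega), if_neg (by omega), if_neg (by omega)]
  push_cast
  field_simp
  ring

theorem coeff_Ed_succ (l : ℚ) (n : ℕ) :
    (n + 1) * coeff (n + 1) (Ed l) = (1 - n * l) * coeff n (Ed l) := by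
  simp only [Ed, coeff_mk, ffac, prod_range_succ, Nat.factorial_succ]
  generalize ∏ j ∈ range n, (1 - (j : ℚ) * l) = P
  push_cast
  field_simp

theorem one_add_X_mul_derivative_Ld (l : ℚ) :
    (1 + X) * d⁄dX ℚ (Ld l) = l • Ld l + 1 := by
  ext n
  rw [add_mul, one_mul, map_add, coeff_X_mul_derivative, coeff_derivative, mul_comm,
    coeff_Ld_succ, map_add, coeff_smul, coeff_one, smul_eq_mul]
  ring

theorem one_add_smul_X_mul_derivative_Ed (l : ℚ) :
    (1 + l • X) * d⁄dX ℚ (Ed l) = Ed l := by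
  ext n
  rw [add_mul, one_mul, smul_mul_assoc, map_add, coeff_smul, coeff_X_mul_derivative,
    coeff_derivative, mul_comm, coeff_Ed_succ, smul_eq_mul]
  ring

theorem Ld_subst_Ed_sub_one (l : ℚ) : (Ld l).subst (Ed l - 1) = X := by
  have hb : HasSubst (Ed l - 1) := .of_constantCoeff_zero' (constantCoeff_Ed_sub_one l)
  set φ : ℚ⟦X⟧ := (Ld l).subst (Ed l - 1)
  have hφ : (1 + l • X) * d⁄dX ℚ φ = l • φ + 1 := by
    have hsubst := congrArg (substAlgHom hb) (one_add_X_mul_derivative_Ld l)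
    simp only [map_mul, map_add, map_one, map_smul, substAlgHom_X, coe_substAlgHom,
      add_sub_cancel] at hsubst
    rw [derivative_subst hb, map_sub, derivative_one, sub_zero, mul_left_comm,
      one_add_smul_X_mul_derivative_Ed, ← hsubst]
    ring
  obtain ⟨u, hu⟩ : IsUnit (1 + l • X : ℚ⟦X⟧) := isUnit_iff_constantCoeff.mpr (by simp)
  have hψ : d⁄dX ℚ (φ - X) = (((u⁻¹ : ℚ⟦X⟧ˣ) : ℚ⟦X⟧) * C l) * (φ - X) := by
    rw [mul_assoc, Units.eq_inv_mul_iff_mul_eq, hu, map_sub, derivative_X, mul_sub, hφ,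
      ← smul_eq_C_mul, mul_one, smul_sub]
    abel
  refine sub_eq_zero.mp (eq_zero_of_derivative_eq_mul ?_ hψ)
  rw [map_sub, constantCoeff_X, sub_zero]
  exact constantCoeff_subst_eq_zero (constantCoeff_Ed_sub_one l) _ (constantCoeff_Ld l)

theorem S1d_eq_zero_of_lt (l : ℚ) {k i : ℕ} (h : k < i) : S1d l k i = 0 := by
  rw [S1d, coeff_pow_eq_zero_of_lt (constantCoeff_Ld l) h, mul_zero]

theorem S1d_one (l : ℚ) {j : ℕ} (hj : 1 ≤ j) : S1d l j 1 = dc l j := by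
  rw [S1d, pow_one, Ld, coeff_mk, if_neg (by omega), Nat.factorial_one, Nat.cast_one]
  field_simp

theorem sum_S2d_mul_S1d (l : ℚ) (n : ℕ) {i : ℕ} (hi : 1 ≤ i) :
    ∑ k ∈ Icc 1 n, S2d l n k * S1d l k i = if n = i then 1 else 0 := by
  have hterm : ∀ k, S2d l n k * S1d l k i
      = n.factorial / i.factorial * (coeff k (Ld l ^ i) * coeff n ((Ed l - 1) ^ k)) := by
    intro k
    rw [S2d, S1d]
    field_simp
  have hrange : ∑ k ∈ Icc 1 n, coeff k (Ld l ^ i) * coeff n ((Ed l - 1) ^ k)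
      = ∑ k ∈ range (n + 1), coeff k (Ld l ^ i) * coeff n ((Ed l - 1) ^ k) := by
    refine sum_subset (fun k hk => by simp at hk ⊢; omega) fun k hk hkn => ?_
    have hk0 : k = 0 := by simp at hk hkn; omega
    rw [hk0, coeff_pow_eq_zero_of_lt (constantCoeff_Ld l) hi, zero_mul]
  simp_rw [hterm, ← mul_sum]
  rw [hrange, ← coeff_subst_eq_sum (constantCoeff_Ed_sub_one l),
    subst_pow (.of_constantCoeff_zero' (constantCoeff_Ed_sub_one l)), Ld_subst_Ed_sub_one,
    coeff_X_pow]
  split_ifs with h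
  · subst h; field_simp
  · rw [mul_zero]

theorem sum_belND_mul_S2d (l : ℚ) {j : ℕ} (hj : 1 ≤ j) :
    ∑ k ∈ Icc 1 j, belND l k * S2d l j k = dc l j := by
  have hbel : ∀ k ∈ Icc 1 j, belND l k = ∑ i ∈ Icc 1 j, dc l i * S1d l k i := by
    intro k hk
    refine sum_subset (Icc_subset_Icc_right (mem_Icc.mp hk).2) fun i hi hik => ?_
    simp only [mem_Icc] at hi hik
    rw [S1d_eq_zero_of_lt l (by omega), mul_zero]
  calc ∑ k ∈ Icc 1 j, belND l k * S2d l j k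
      = ∑ i ∈ Icc 1 j, dc l i * ∑ k ∈ Icc 1 j, S2d l j k * S1d l k i := by
        rw [sum_congr rfl fun k hk => by rw [hbel k hk, sum_mul], sum_comm]
        simp_rw [mul_sum]
        exact sum_congr rfl fun _ _ => sum_congr rfl fun _ _ => by ring
    _ = dc l j := by
        rw [sum_congr rfl fun i hi => by rw [sum_S2d_mul_S1d l j (mem_Icc.mp hi).1]]
        simp [hj]

theorem stmt11 (l : ℚ) (n : ℕ) (hn : 2 ≤ n) :
    (∑ j ∈ Finset.Icc 1 n, ∑ k ∈ Finset.Icc 1 j, belND l k * S2d l j k * S2d l n j) = 0 ∧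
      belND l 1 = 1 := by
  refine ⟨?_, by simp [belND, S1d_one, dc]⟩
  calc ∑ j ∈ Icc 1 n, ∑ k ∈ Icc 1 j, belND l k * S2d l j k * S2d l n j
      = ∑ j ∈ Icc 1 n, S2d l n j * S1d l j 1 := sum_congr rfl fun j hj => by
        rw [← sum_mul, sum_belND_mul_S2d l (mem_Icc.mp hj).1, S1d_one l (mem_Icc.mp hj).1,
          mul_comm]
    _ = 0 := by rw [sum_S2d_mul_S1d l n le_rfl, if_neg (by omega)]

end
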